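/- arXiv:2107.12819 — 2 statements merged into one kernel-verified Lean document; each statement's English description precedes it below -/
import Mathlib

section
/- There is a constant K such that for all integers n ≥ 3, the product over primes p dividing n of (1 + 1/p) is at most K · log log n. -/
/-!
Split the prime factors of `n` at `y = ⌊log₂ n⌋`. Fewer than `y + 1` of them exceed `y`, since
their product divides `n < 2^(y+1)`; so they contribute a factor at most `e`. The small ones
contribute at most `exp (∑_{p ≤ y} 1/p)`, and Mertens' estimate `∑_{p ≤ y} 1/p ≤ log log y + O(1)`
makes this `O(log y) = O(log log n)`. Mertens' estimate comes from
`∑_{p ≤ N} log p / p ≤ log N + log 4` (compare `log N! = ∑_{m ≤ N} Λ m ⌊N/m⌋` with Chebyshev's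
bound on `θ`) by partial summation over the dyadic blocks `2^k ≤ p < 2^(k+1)`.
-/

open Finset Real
open Nat (primesLE prime_of_mem_primesLE)
open ArithmeticFunction (vonMangoldt_apply_prime vonMangoldt_nonneg vonMangoldt_mul_zeta
  sum_Ioc_mul_zeta_eq_sum)
open scoped ArithmeticFunction.vonMangoldt

theorem natLog_mul_log_le_log {b : ℕ} (hb : 1 < b) (n : ℕ) :
    (Nat.log b n : ℝ) * log b ≤ log n := by
  rw [← le_div_iff₀ (log_pos (by exact_mod_cast hb)), log_div_log]
  exact natLog_le_logb n b

theorem sum_Icc_div_le_harmonic_add (d : ℕ → ℝ) (c : ℝ) (K : ℕ)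
    (h : ∀ j ≤ K, ∑ k ∈ Icc 1 j, d k ≤ j + c) :
    ∑ k ∈ Icc 1 K, d k / k ≤ harmonic K + c := by
  rcases K.eq_zero_or_pos with rfl | hK
  · simpa using h 0 le_rfl
  -- Abel summation, bounding each partial sum `∑_{k ≤ j} d k` with `j < m` by `j + c`.
  have summation : ∀ m, 1 ≤ m → m ≤ K →
      ∑ k ∈ Icc 1 m, d k / k ≤ (∑ k ∈ Icc 1 m, d k) / m + (harmonic m - 1) + c - c / m := by
    intro m hm
    induction m, hm using Nat.le_induction with
    | base => simp
    | succ m hm ih =>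
      intro hmK
      set S := ∑ k ∈ Icc 1 m, d k
      have hm0 : (0 : ℝ) < m := by exact_mod_cast hm
      have key : S / m - S / (m + 1) ≤ 1 / (m + 1) + c / m - c / (m + 1) :=
        calc S / m - S / (m + 1) = S / (m * (m + 1)) := by field_simp; ring
          _ ≤ (m + c) / (m * (m + 1)) :=
            div_le_div_of_nonneg_right (h m (by omega)) (by positivity)
          _ = 1 / (m + 1) + c / m - c / (m + 1) := by field_simp; ring
      rw [sum_Icc_succ_top (by omega), sum_Icc_succ_top (by omega), harmonic_succ]
      push_cast
      rw [add_div S, ← one_div]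
      linarith [ih (by omega)]
  have hK0 : (0 : ℝ) < K := by exact_mod_cast hK
  have hS : (∑ k ∈ Icc 1 K, d k) / K ≤ 1 + c / K :=
    calc (∑ k ∈ Icc 1 K, d k) / K ≤ (K + c) / K :=
          div_le_div_of_nonneg_right (h K le_rfl) hK0.le
      _ = 1 + c / K := by field_simp
  linarith [summation K hK le_rfl]

theorem exp_harmonic_le (K : ℕ) : exp (harmonic K) ≤ exp 1 * (K + 1) := by
  rcases K.eq_zero_or_pos with rfl | hK
  · simp [(one_lt_exp_iff.2 one_pos).le]
  calc exp (harmonic K) ≤ exp (1 + log K) := exp_le_exp.2 (harmonic_le_one_add_log K)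
    _ = exp 1 * K := by rw [exp_add, exp_log (by exact_mod_cast hK)]
    _ ≤ exp 1 * (K + 1) := by gcongr; linarith

theorem sum_primesLE_log_mul_div_le (N : ℕ) :
    ∑ p ∈ primesLE N, log p * (N / p : ℕ) ≤ N * log N := by
  calc ∑ p ∈ primesLE N, log p * (N / p : ℕ)
      = ∑ p ∈ primesLE N, Λ p * (N / p : ℕ) :=
        sum_congr rfl fun p hp => by rw [vonMangoldt_apply_prime (prime_of_mem_primesLE hp)]
    _ ≤ ∑ m ∈ Ioc 0 N, Λ m * (N / m : ℕ) := by
        rw [Nat.primesLE_eq_filter_Ioc_zero]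
        exact sum_le_sum_of_subset_of_nonneg (filter_subset _ _)
          fun m _ _ => mul_nonneg vonMangoldt_nonneg (Nat.cast_nonneg _)
    _ = ∑ m ∈ Ioc 0 N, log m := by
        rw [← sum_Ioc_mul_zeta_eq_sum, vonMangoldt_mul_zeta]; rfl
    _ ≤ ∑ m ∈ Ioc 0 N, log N := by
        refine sum_le_sum fun m hm => ?_
        obtain ⟨hm0, hmN⟩ := mem_Ioc.1 hm
        exact log_le_log (by exact_mod_cast hm0) (by exact_mod_cast hmN)
    _ = N * log N := by simp

theorem sum_primesLE_log_div_le (N : ℕ) :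
    ∑ p ∈ primesLE N, log p / p ≤ log N + log 4 := by
  rcases N.eq_zero_or_pos with rfl | hN
  · simp only [Nat.primesLE_zero, sum_empty, Nat.cast_zero, log_zero, zero_add]
    positivity
  have hterm : ∀ p ∈ primesLE N, N * (log p / p) ≤ log p * (N / p : ℕ) + log p := by
    intro p hp
    have hp : (0 : ℝ) < p := by exact_mod_cast (prime_of_mem_primesLE hp).pos
    have hfloor : (N : ℝ) / p ≤ (N / p : ℕ) + 1 := by
      simpa [Nat.floor_div_eq_div] using (Nat.lt_floor_add_one ((N : ℝ) / p)).le
    calc (N : ℝ) * (log p / p) = N / p * log p := by ring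
      _ ≤ ((N / p : ℕ) + 1) * log p := mul_le_mul_of_nonneg_right hfloor (log_natCast_nonneg p)
      _ = log p * (N / p : ℕ) + log p := by ring
  have hsum : N * ∑ p ∈ primesLE N, log p / p ≤ N * (log N + log 4) := by
    rw [mul_sum]
    calc ∑ p ∈ primesLE N, N * (log p / p)
        ≤ ∑ p ∈ primesLE N, log p * (N / p : ℕ) + Chebyshev.theta N := by
          rw [Chebyshev.theta_eq_sum_primesLE_log, ← sum_add_distrib]; exact sum_le_sum hterm
      _ ≤ N * log N + log 4 * N :=
          add_le_add (sum_primesLE_log_mul_div_le N) (Chebyshev.theta_le_log4_mul_x N.cast_nonneg)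
      _ = N * (log N + log 4) := by ring
  exact le_of_mul_le_mul_left hsum (by exact_mod_cast hN)

theorem sum_primesBelow_two_pow_log_div_le (j : ℕ) :
    ∑ p ∈ Nat.primesBelow (2 ^ (j + 1)), log p / p ≤ (j + 3) * log 2 :=
  calc ∑ p ∈ Nat.primesBelow (2 ^ (j + 1)), log p / p
      ≤ ∑ p ∈ primesLE (2 ^ (j + 1)), log p / p :=
        sum_le_sum_of_subset_of_nonneg (fun p hp => Nat.mem_primesLE.2
          ⟨(Nat.lt_of_mem_primesBelow hp).le, Nat.prime_of_mem_primesBelow hp⟩)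
          fun p _ _ => div_nonneg (log_natCast_nonneg p) p.cast_nonneg
    _ ≤ log (2 ^ (j + 1) : ℕ) + log 4 := sum_primesLE_log_div_le _
    _ = (j + 3) * log 2 := by
        rw [show (4 : ℝ) = 2 ^ 2 by norm_num]; push_cast; rw [log_pow, log_pow]; push_cast; ring

theorem inv_le_log_div_div_mul_natLog {p : ℕ} (hp : 2 ≤ p) :
    (p : ℝ)⁻¹ ≤ log p / p / (log 2 * Nat.log 2 p) := by
  have hp0 : (0 : ℝ) < p := by exact_mod_cast (by omega : 0 < p)
  have hk : (0 : ℝ) < Nat.log 2 p := by exact_mod_cast Nat.log_pos one_lt_two hp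
  rw [le_div_iff₀ (by positivity), div_eq_mul_inv (log p), mul_comm (log p)]
  gcongr
  rw [mul_comm]
  exact_mod_cast natLog_mul_log_le_log one_lt_two p

theorem sum_Icc_sum_primesLE_log_div_le (y j : ℕ) :
    ∑ k ∈ Icc 1 j, ∑ p ∈ primesLE y with Nat.log 2 p = k, log p / p ≤ (j + 3) * log 2 := by
  have hbelow : ∀ p ∈ Nat.primesBelow (2 ^ (j + 1)), Nat.log 2 p ∈ Icc 1 j := fun p hp =>
    mem_Icc.2 ⟨Nat.log_pos one_lt_two (Nat.prime_of_mem_primesBelow hp).two_le,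
      Nat.lt_succ_iff.1 (Nat.log_lt_of_lt_pow (Nat.prime_of_mem_primesBelow hp).ne_zero
        (Nat.lt_of_mem_primesBelow hp))⟩
  calc ∑ k ∈ Icc 1 j, ∑ p ∈ primesLE y with Nat.log 2 p = k, log p / p
      ≤ ∑ k ∈ Icc 1 j, ∑ p ∈ Nat.primesBelow (2 ^ (j + 1)) with Nat.log 2 p = k, log p / p := by
        refine sum_le_sum fun k hk => sum_le_sum_of_subset_of_nonneg ?_
          fun p _ _ => div_nonneg (log_natCast_nonneg p) p.cast_nonneg
        intro p hp
        obtain ⟨hpy, rfl⟩ := mem_filter.1 hp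
        refine mem_filter.2 ⟨Nat.mem_primesBelow.2 ⟨?_, prime_of_mem_primesLE hpy⟩, rfl⟩
        calc p < 2 ^ (Nat.log 2 p + 1) := Nat.lt_pow_succ_log_self one_lt_two p
          _ ≤ 2 ^ (j + 1) := Nat.pow_le_pow_right two_pos (by simpa using (mem_Icc.1 hk).2)
    _ = ∑ p ∈ Nat.primesBelow (2 ^ (j + 1)), log p / p := sum_fiberwise_of_maps_to hbelow _
    _ ≤ (j + 3) * log 2 := sum_primesBelow_two_pow_log_div_le j

theorem sum_inv_primesLE_le (y : ℕ) :
    ∑ p ∈ primesLE y, (p : ℝ)⁻¹ ≤ harmonic (Nat.log 2 y) + 3 := by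
  set K := Nat.log 2 y
  have hlog2 : 0 < log 2 := log_pos one_lt_two
  have hmaps : ∀ p ∈ primesLE y, Nat.log 2 p ∈ Icc 1 K := fun p hp =>
    mem_Icc.2 ⟨Nat.log_pos one_lt_two (prime_of_mem_primesLE hp).two_le,
      Nat.log_mono_right (Nat.le_of_mem_primesLE hp)⟩
  -- `d k` is the mass of `log p / p` on the block `2^k ≤ p < 2^(k+1)`, in units of `log 2`.
  set d : ℕ → ℝ := fun k => (∑ p ∈ primesLE y with Nat.log 2 p = k, log p / p) / log 2
  have hblock : ∀ k ∈ Icc 1 K, ∑ p ∈ primesLE y with Nat.log 2 p = k, (p : ℝ)⁻¹ ≤ d k / k := by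
    intro k _
    rw [div_div, sum_div]
    refine sum_le_sum fun p hp => ?_
    obtain ⟨hpy, rfl⟩ := mem_filter.1 hp
    exact inv_le_log_div_div_mul_natLog (prime_of_mem_primesLE hpy).two_le
  have hpartial : ∀ j ≤ K, ∑ k ∈ Icc 1 j, d k ≤ j + 3 := fun j _ => by
    rw [← sum_div, div_le_iff₀ hlog2]
    exact sum_Icc_sum_primesLE_log_div_le y j
  calc ∑ p ∈ primesLE y, (p : ℝ)⁻¹
      = ∑ k ∈ Icc 1 K, ∑ p ∈ primesLE y with Nat.log 2 p = k, (p : ℝ)⁻¹ :=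
        (sum_fiberwise_of_maps_to hmaps _).symm
    _ ≤ ∑ k ∈ Icc 1 K, d k / k := sum_le_sum hblock
    _ ≤ harmonic K + 3 := sum_Icc_div_le_harmonic_add d 3 K hpartial

theorem prod_primesLE_one_add_inv_le (y : ℕ) :
    ∏ p ∈ primesLE y, (1 + (p : ℝ)⁻¹) ≤ exp 4 * (Nat.log 2 y + 1) :=
  calc ∏ p ∈ primesLE y, (1 + (p : ℝ)⁻¹)
      ≤ exp (∑ p ∈ primesLE y, (p : ℝ)⁻¹) := prod_one_add_le_exp_sum _ fun p => by positivity
    _ ≤ exp (harmonic (Nat.log 2 y) + 3) := exp_le_exp.2 (sum_inv_primesLE_le y)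
    _ ≤ exp 4 * (Nat.log 2 y + 1) := by
      rw [exp_add, show (4 : ℝ) = 1 + 3 by norm_num, exp_add]
      nlinarith [exp_harmonic_le (Nat.log 2 y), exp_pos 3]

theorem card_primeFactors_filter_lt_le {n y : ℕ} (hn : n < 2 ^ (y + 1)) :
    #{p ∈ n.primeFactors | y < p} ≤ y := by
  rcases Nat.lt_or_ge n 2 with hn1 | hn2
  · interval_cases n <;> simp
  have hy : 1 ≤ y := by
    rcases Nat.eq_zero_or_pos y with rfl | hy
    · simp only [zero_add, pow_one] at hn; omega
    · exact hy
  set s := {p ∈ n.primeFactors | y < p}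
  have hpow : (y + 1) ^ #s < (y + 1) ^ (y + 1) :=
    calc (y + 1) ^ #s ≤ ∏ p ∈ s, p := pow_card_le_prod _ _ _ fun p hp => (mem_filter.1 hp).2
      _ ≤ n := Nat.le_of_dvd (by omega)
          ((prod_dvd_prod_of_subset _ _ _ (filter_subset _ _)).trans (Nat.prod_primeFactors_dvd n))
      _ < 2 ^ (y + 1) := hn
      _ ≤ (y + 1) ^ (y + 1) := Nat.pow_le_pow_left (by omega) _
  have := (Nat.pow_lt_pow_iff_right (by omega)).1 hpow
  omega

theorem prod_primeFactors_filter_lt_le_exp_one {n y : ℕ} (hn : n < 2 ^ (y + 1)) :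
    ∏ p ∈ n.primeFactors with y < p, (1 + (p : ℝ)⁻¹) ≤ exp 1 := by
  have hy : (0 : ℝ) < y + 1 := by positivity
  calc ∏ p ∈ n.primeFactors with y < p, (1 + (p : ℝ)⁻¹)
      ≤ exp (∑ p ∈ n.primeFactors with y < p, (p : ℝ)⁻¹) :=
        prod_one_add_le_exp_sum _ fun p => by positivity
    _ ≤ exp (∑ p ∈ n.primeFactors with y < p, ((y : ℝ) + 1)⁻¹) := by
        gcongr with p hp
        exact_mod_cast (mem_filter.1 hp).2
    _ ≤ exp 1 := by
        rw [sum_const, nsmul_eq_mul, ← div_eq_mul_inv, exp_le_exp, div_le_one hy]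
        exact_mod_cast (card_primeFactors_filter_lt_le hn).trans (Nat.le_succ y)

theorem one_div_twelve_le_log_log {n : ℕ} (hn : 3 ≤ n) : 1 / 12 ≤ log (log n) := by
  have h3 : 1.0986 ≤ log n := (log_le_log (by norm_num) (by exact_mod_cast hn)).trans'
    (log_three_gt_d9.le.trans' (by norm_num))
  calc (1 : ℝ) / 12 ≤ 1 - (log n)⁻¹ := by
        rw [inv_eq_one_div, le_sub_iff_add_le, ← le_sub_iff_add_le', div_le_iff₀ (by linarith)]
        nlinarith
    _ ≤ log (log n) := one_sub_inv_le_log_of_pos (by linarith)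

theorem natLog_two_natLog_two_add_one_le {n : ℕ} (hn : 3 ≤ n) :
    (Nat.log 2 (Nat.log 2 n) + 1 : ℝ) ≤ 40 * log (log n) := by
  have hlog2 : 1 / 2 < log 2 := lt_trans (by norm_num) log_two_gt_d9
  have hlog2' : log 2 < 1 := lt_trans log_two_lt_d9 (by norm_num)
  have hlogn : 0 < log n := log_pos (by exact_mod_cast (by omega : 1 < n))
  have hy : (0 : ℝ) < Nat.log 2 n := by exact_mod_cast Nat.log_pos one_lt_two (by omega)
  have hy_le : (Nat.log 2 n : ℝ) ≤ log n / log 2 := by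
    rw [le_div_iff₀ (by linarith)]; exact natLog_mul_log_le_log one_lt_two n
  have hloglog2 : -log (log 2) ≤ 1 := by
    have := log_le_sub_one_of_pos (inv_pos.2 (by linarith : 0 < log 2))
    rw [log_inv] at this
    have : (log 2)⁻¹ ≤ 2 := by rw [inv_le_comm₀ (by linarith) two_pos]; linarith
    linarith
  have hK : (Nat.log 2 (Nat.log 2 n) : ℝ) * log 2 ≤ log (log n) + 1 :=
    calc _ ≤ log (Nat.log 2 n) := by exact_mod_cast natLog_mul_log_le_log one_lt_two _
      _ ≤ log (log n / log 2) := log_le_log hy hy_le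
      _ = log (log n) - log (log 2) := log_div hlogn.ne' (by linarith)
      _ ≤ log (log n) + 1 := by linarith
  nlinarith [one_div_twelve_le_log_log hn]

/-- There is a constant `K` such that for all integers `n ≥ 3`,
`∏_{p | n} (1 + 1/p) ≤ K · log log n`. -/
theorem prod_one_add_inv_prime_le : ∃ K : ℝ, ∀ n : ℕ, 3 ≤ n →
    ∏ p ∈ n.primeFactors, (1 + (p : ℝ)⁻¹) ≤ K * Real.log (Real.log n) := by
  refine ⟨40 * exp 5, fun n hn => ?_⟩
  set y := Nat.log 2 n
  have hsmall : ∏ p ∈ n.primeFactors with p ≤ y, (1 + (p : ℝ)⁻¹)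
      ≤ ∏ p ∈ primesLE y, (1 + (p : ℝ)⁻¹) :=
    prod_le_prod_of_subset_of_one_le
      (fun p hp => Nat.mem_primesLE.2
        ⟨(mem_filter.1 hp).2, Nat.prime_of_mem_primeFactors (mem_filter.1 hp).1⟩)
      (fun p _ => by positivity) fun p _ _ => le_add_of_nonneg_right (by positivity)
  have hlarge : ∏ p ∈ n.primeFactors with ¬p ≤ y, (1 + (p : ℝ)⁻¹) ≤ exp 1 := by
    simpa only [not_le] using
      prod_primeFactors_filter_lt_le_exp_one (Nat.lt_pow_succ_log_self one_lt_two n)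
  calc ∏ p ∈ n.primeFactors, (1 + (p : ℝ)⁻¹)
      = (∏ p ∈ n.primeFactors with p ≤ y, (1 + (p : ℝ)⁻¹))
          * ∏ p ∈ n.primeFactors with ¬p ≤ y, (1 + (p : ℝ)⁻¹) :=
        (prod_filter_mul_prod_filter_not _ _ _).symm
    _ ≤ exp 4 * (Nat.log 2 y + 1) * exp 1 :=
        mul_le_mul (hsmall.trans (prod_primesLE_one_add_inv_le y)) hlarge
          (prod_nonneg fun p _ => by positivity) (by positivity)
    _ = exp 5 * (Nat.log 2 y + 1) := by
        rw [show (5 : ℝ) = 4 + 1 by norm_num, exp_add]; ring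
    _ ≤ exp 5 * (40 * log (log n)) := by
        gcongr; exact natLog_two_natLog_two_add_one_le hn
    _ = 40 * exp 5 * log (log n) := by ring
end

section
/- Let Γ(s) denote the Gamma function, and for s ∈ ℂ (away from poles) define Δ⁺(s) = (2⁴3⁶/π⁴)^{s/2} Γ(s/2) Γ(s/2 + 1/2) Γ(s/2 - 1/12) Γ(s/2 + 1/12) and Δ⁻(s) = (2⁴3⁶/π⁴)^{s/2} Γ(s/2) Γ(s/2 + 1/2) Γ(s/2 + 5/12) Γ(s/2 + 7/12). Let T be the matrix [[√3, 1], [√3, -1]] and let M(s) = (3^{6s-2}/(2π^{4s})) Γ(s)² Γ(s - 1/6) Γ(s + 1/6) · [[sin 2πs, sin πs], [3 sin πs, sin 2πs]]. Then Δ(1-s) · T · M(s) = diag(3, -3) · Δ(s) · T, where Δ(s) = diag(Δ⁺(s), Δ⁻(s)). -/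
open Complex

/-- The gamma factor `Δ⁺(s)`. -/
noncomputable def DeltaPlus (s : ℂ) : ℂ :=
  ((2 : ℂ) ^ 4 * 3 ^ 6 / (Real.pi : ℂ) ^ 4) ^ (s / 2) * Complex.Gamma (s / 2) *
    Complex.Gamma (s / 2 + 1 / 2) * Complex.Gamma (s / 2 - 1 / 12) *
    Complex.Gamma (s / 2 + 1 / 12)

/-- The gamma factor `Δ⁻(s)`. -/
noncomputable def DeltaMinus (s : ℂ) : ℂ :=
  ((2 : ℂ) ^ 4 * 3 ^ 6 / (Real.pi : ℂ) ^ 4) ^ (s / 2) * Complex.Gamma (s / 2) *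
    Complex.Gamma (s / 2 + 1 / 2) * Complex.Gamma (s / 2 + 5 / 12) *
    Complex.Gamma (s / 2 + 7 / 12)

/-- The diagonal matrix `Δ(s) = diag(Δ⁺(s), Δ⁻(s))`. -/
noncomputable def DeltaMat (s : ℂ) : Matrix (Fin 2) (Fin 2) ℂ :=
  !![DeltaPlus s, 0; 0, DeltaMinus s]

/-- The diagonalizing matrix `T = [[√3, 1], [√3, -1]]`. -/
noncomputable def Tmat : Matrix (Fin 2) (Fin 2) ℂ :=
  !![(Real.sqrt 3 : ℂ), 1; (Real.sqrt 3 : ℂ), -1]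

/-- The matrix `M(s)` in the functional equation of the Shintani zeta functions. -/
noncomputable def Mmat (s : ℂ) : Matrix (Fin 2) (Fin 2) ℂ :=
  ((3 : ℂ) ^ (6 * s - 2) / (2 * (Real.pi : ℂ) ^ (4 * s)) * (Complex.Gamma s) ^ 2 *
      Complex.Gamma (s - 1 / 6) * Complex.Gamma (s + 1 / 6)) •
    !![Complex.sin (2 * (Real.pi : ℂ) * s), Complex.sin ((Real.pi : ℂ) * s);
       3 * Complex.sin ((Real.pi : ℂ) * s), Complex.sin (2 * (Real.pi : ℂ) * s)]

lemma abstract_key {g1 g2 g3 g4 g5 g6 u1 u2 u5 u6 γ1 γ2 γ3 a1 a2 p q t w b1 b2 b3 S : ℂ}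
    {H1 H2 H5 H6 : ℂ}
    (e1 : g1 * H1 * u1 = p) (e2 : g2 * H2 * u2 = p)
    (e5 : g5 * H5 * u5 = p) (e6 : g6 * H6 * u6 = p)
    (d1 : g1 * g2 = γ1 * b1 * q) (d2 : g3 * g5 = γ2 * b2 * q) (d3 : g4 * g6 = γ3 * b3 * q)
    (tr : S = 8 * u1 * u2 * u5 * u6)
    (pw : p ^ 4 * a1 * t * 8 = 3 * a2 * (b1 * b1 * b2 * b3) * q ^ 4 * (2 * w))
    (hg1 : g1 ≠ 0) (hg2 : g2 ≠ 0) (hg5 : g5 ≠ 0) (hg6 : g6 ≠ 0)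
    (hb1 : b1 ≠ 0) (hb2 : b2 ≠ 0) (hb3 : b3 ≠ 0) (hq : q ≠ 0) :
    a1 * H1 * H2 * H6 * H5 * (t * γ1 ^ 2 * γ2 * γ3) * S
      = 3 * (a2 * g1 * g2 * g3 * g4) * (2 * w) := by
  have hK : (g1 * g2 * g5 * g6 * (b1 * b1 * b2 * b3) * q ^ 4) ≠ 0 := by
    apply mul_ne_zero; apply mul_ne_zero; apply mul_ne_zero; apply mul_ne_zero
    apply mul_ne_zero hg1 hg2
    exacts [hg5, hg6, by exact mul_ne_zero (mul_ne_zero (mul_ne_zero hb1 hb1) hb2) hb3,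
      pow_ne_zero _ hq]
  apply mul_left_cancel₀ hK
  rw [tr]
  calc g1 * g2 * g5 * g6 * (b1 * b1 * b2 * b3) * q ^ 4 *
        (a1 * H1 * H2 * H6 * H5 * (t * γ1 ^ 2 * γ2 * γ3) * (8 * u1 * u2 * u5 * u6))
      = 8 * (a1 * t) * ((g1 * H1 * u1) * ((g2 * H2 * u2) * ((g5 * H5 * u5) * (g6 * H6 * u6)))) *
          ((γ1 * b1 * q) * ((γ1 * b1 * q) * ((γ2 * b2 * q) * (γ3 * b3 * q)))) := by ring
    _ = 8 * (a1 * t) * (p * (p * (p * p))) *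
          ((g1 * g2) * ((g1 * g2) * ((g3 * g5) * (g4 * g6)))) := by
        rw [e1, e2, e5, e6, ← d1, ← d2, ← d3]
    _ = (p ^ 4 * a1 * t * 8) * (g1 * g2 * g1 * g2 * g3 * g5 * g4 * g6) := by ring
    _ = (3 * a2 * (b1 * b1 * b2 * b3) * q ^ 4 * (2 * w)) *
          (g1 * g2 * g1 * g2 * g3 * g5 * g4 * g6) := by rw [pw]
    _ = g1 * g2 * g5 * g6 * (b1 * b1 * b2 * b3) * q ^ 4 *
          (3 * (a2 * g1 * g2 * g3 * g4) * (2 * w)) := by ring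

lemma sin_mul_sin (a b : ℂ) :
    Complex.sin a * Complex.sin b = (Complex.cos (a - b) - Complex.cos (a + b)) / 2 := by
  rw [Complex.cos_sub, Complex.cos_add]; ring

lemma trigB (s : ℂ) :
    Complex.sin (2 * (Real.pi : ℂ) * s) + (Real.sqrt 3 : ℂ) * Complex.sin ((Real.pi : ℂ) * s)
      = 8 * Complex.sin ((Real.pi : ℂ) * (s / 2)) * Complex.sin ((Real.pi : ℂ) * (s / 2 + 1 / 2))
          * Complex.sin ((Real.pi : ℂ) * (s / 2 + 5 / 12))
          * Complex.sin ((Real.pi : ℂ) * (s / 2 + 7 / 12)) := by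
  have h2 : Complex.sin ((Real.pi : ℂ) * (s / 2 + 1 / 2)) = Complex.cos ((Real.pi : ℂ) * (s / 2)) := by
    rw [show (Real.pi : ℂ) * (s / 2 + 1 / 2) = (Real.pi : ℂ) * (s / 2) + (Real.pi : ℂ) / 2 by ring,
      Complex.sin_add_pi_div_two]
  have h56 : Complex.sin ((Real.pi : ℂ) * (s / 2 + 5 / 12)) * Complex.sin ((Real.pi : ℂ) * (s / 2 + 7 / 12))
      = ((Real.sqrt 3 : ℂ) / 2 + Complex.cos ((Real.pi : ℂ) * s)) / 2 := by
    rw [sin_mul_sin,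
      show (Real.pi : ℂ) * (s / 2 + 5 / 12) - (Real.pi : ℂ) * (s / 2 + 7 / 12) = -((Real.pi : ℂ) / 6) by ring,
      show (Real.pi : ℂ) * (s / 2 + 5 / 12) + (Real.pi : ℂ) * (s / 2 + 7 / 12) = (Real.pi : ℂ) * s + (Real.pi : ℂ) by ring,
      Complex.cos_neg, Complex.cos_add_pi,
      show ((Real.pi : ℂ)) / 6 = ((Real.pi / 6 : ℝ) : ℂ) by push_cast; ring,
      ← Complex.ofReal_cos, Real.cos_pi_div_six]
    push_cast; ring
  have hs1 : Complex.sin (2 * (Real.pi : ℂ) * s)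
      = 2 * Complex.sin ((Real.pi : ℂ) * s) * Complex.cos ((Real.pi : ℂ) * s) := by
    rw [show (2 : ℂ) * (Real.pi : ℂ) * s = 2 * ((Real.pi : ℂ) * s) by ring, Complex.sin_two_mul]
  have hs2 : Complex.sin ((Real.pi : ℂ) * s)
      = 2 * Complex.sin ((Real.pi : ℂ) * (s / 2)) * Complex.cos ((Real.pi : ℂ) * (s / 2)) := by
    rw [show (Real.pi : ℂ) * s = 2 * ((Real.pi : ℂ) * (s / 2)) by ring, Complex.sin_two_mul]
  rw [h2]
  linear_combination hs1 + (2 * Complex.cos ((Real.pi : ℂ) * s) + (Real.sqrt 3 : ℂ)) * hs2 -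
    (8 * Complex.sin ((Real.pi : ℂ) * (s / 2)) * Complex.cos ((Real.pi : ℂ) * (s / 2))) * h56

lemma trigD (s : ℂ) :
    (Real.sqrt 3 : ℂ) * Complex.sin ((Real.pi : ℂ) * s) - Complex.sin (2 * (Real.pi : ℂ) * s)
      = 8 * Complex.sin ((Real.pi : ℂ) * (s / 2)) * Complex.sin ((Real.pi : ℂ) * (s / 2 + 1 / 2))
          * Complex.sin ((Real.pi : ℂ) * (s / 2 - 1 / 12))
          * Complex.sin ((Real.pi : ℂ) * (s / 2 + 1 / 12)) := by
  have h2 : Complex.sin ((Real.pi : ℂ) * (s / 2 + 1 / 2)) = Complex.cos ((Real.pi : ℂ) * (s / 2)) := by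
    rw [show (Real.pi : ℂ) * (s / 2 + 1 / 2) = (Real.pi : ℂ) * (s / 2) + (Real.pi : ℂ) / 2 by ring,
      Complex.sin_add_pi_div_two]
  have h34 : Complex.sin ((Real.pi : ℂ) * (s / 2 - 1 / 12)) * Complex.sin ((Real.pi : ℂ) * (s / 2 + 1 / 12))
      = ((Real.sqrt 3 : ℂ) / 2 - Complex.cos ((Real.pi : ℂ) * s)) / 2 := by
    rw [sin_mul_sin,
      show (Real.pi : ℂ) * (s / 2 - 1 / 12) - (Real.pi : ℂ) * (s / 2 + 1 / 12) = -((Real.pi : ℂ) / 6) by ring,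
      show (Real.pi : ℂ) * (s / 2 - 1 / 12) + (Real.pi : ℂ) * (s / 2 + 1 / 12) = (Real.pi : ℂ) * s by ring,
      Complex.cos_neg,
      show ((Real.pi : ℂ)) / 6 = ((Real.pi / 6 : ℝ) : ℂ) by push_cast; ring,
      ← Complex.ofReal_cos, Real.cos_pi_div_six]
    push_cast; ring
  have hs1 : Complex.sin (2 * (Real.pi : ℂ) * s)
      = 2 * Complex.sin ((Real.pi : ℂ) * s) * Complex.cos ((Real.pi : ℂ) * s) := by
    rw [show (2 : ℂ) * (Real.pi : ℂ) * s = 2 * ((Real.pi : ℂ) * s) by ring, Complex.sin_two_mul]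
  have hs2 : Complex.sin ((Real.pi : ℂ) * s)
      = 2 * Complex.sin ((Real.pi : ℂ) * (s / 2)) * Complex.cos ((Real.pi : ℂ) * (s / 2)) := by
    rw [show (Real.pi : ℂ) * s = 2 * ((Real.pi : ℂ) * (s / 2)) by ring, Complex.sin_two_mul]
  rw [h2]
  linear_combination -hs1 + ((Real.sqrt 3 : ℂ) - 2 * Complex.cos ((Real.pi : ℂ) * s)) * hs2 -
    (8 * Complex.sin ((Real.pi : ℂ) * (s / 2)) * Complex.cos ((Real.pi : ℂ) * (s / 2))) * h34

lemma cpow_eq_exp {x : ℝ} (hx : 0 < x) (w : ℂ) :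
    (x : ℂ) ^ w = Complex.exp ((Real.log x : ℂ) * w) := by
  rw [Complex.cpow_def_of_ne_zero (by exact_mod_cast hx.ne'), ← Complex.ofReal_log hx.le]

lemma exp_helper (a1 a2 a3 b1 b2 b3 b4 b5 b6 b7 : ℂ)
    (h : a1 + a2 + a3 = (Real.log (3 / 4 : ℝ) : ℂ) + (b1 + b2 + b3 + b4 + b5 + b6 + b7)) :
    Complex.exp a1 * Complex.exp a2 * Complex.exp a3 * 8
      = 3 * Complex.exp b1 * (Complex.exp b2 * Complex.exp b3 * Complex.exp b4 * Complex.exp b5)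
          * Complex.exp b6 * (2 * Complex.exp b7) := by
  have h34 : Complex.exp ((Real.log (3 / 4 : ℝ) : ℂ)) = ((3 / 4 : ℝ) : ℂ) := by
    rw [← Complex.ofReal_exp, Real.exp_log (by norm_num)]
  calc Complex.exp a1 * Complex.exp a2 * Complex.exp a3 * 8
      = Complex.exp (a1 + a2 + a3) * 8 := by rw [Complex.exp_add, Complex.exp_add]
    _ = Complex.exp ((Real.log (3 / 4 : ℝ) : ℂ)) *
          Complex.exp (b1 + b2 + b3 + b4 + b5 + b6 + b7) * 8 := by rw [h, Complex.exp_add]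
    _ = _ := by
        rw [h34]
        simp only [Complex.exp_add]
        push_cast
        ring

lemma powId (s : ℂ) :
    (Real.pi : ℂ) ^ 4 * ((2 : ℂ) ^ 4 * 3 ^ 6 / (Real.pi : ℂ) ^ 4) ^ ((1 - s) / 2)
        * (3 : ℂ) ^ (6 * s - 2) * 8
      = 3 * ((2 : ℂ) ^ 4 * 3 ^ 6 / (Real.pi : ℂ) ^ 4) ^ (s / 2) *
        ((2 : ℂ) ^ (1 - s) * (2 : ℂ) ^ (1 - s) * (2 : ℂ) ^ (1 - (s - 1 / 6))
          * (2 : ℂ) ^ (1 - (s + 1 / 6))) *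
        (Real.sqrt Real.pi : ℂ) ^ 4 * (2 * (Real.pi : ℂ) ^ (4 * s)) := by
  have hπ := Real.pi_pos
  have hA : (0 : ℝ) < 2 ^ 4 * 3 ^ 6 / Real.pi ^ 4 := by positivity
  have hbase : ((2 : ℂ) ^ 4 * 3 ^ 6 / (Real.pi : ℂ) ^ 4)
      = ((2 ^ 4 * 3 ^ 6 / Real.pi ^ 4 : ℝ) : ℂ) := by push_cast; ring
  rw [hbase, cpow_eq_exp hA ((1 - s) / 2), cpow_eq_exp hA (s / 2)]
  rw [show ((3 : ℂ)) ^ (6 * s - 2) = Complex.exp ((Real.log 3 : ℂ) * (6 * s - 2)) by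
    rw [show (3 : ℂ) = ((3 : ℝ) : ℂ) by norm_num, cpow_eq_exp (by norm_num)]]
  rw [show ((2 : ℂ)) ^ (1 - s) = Complex.exp ((Real.log 2 : ℂ) * (1 - s)) by
    rw [show (2 : ℂ) = ((2 : ℝ) : ℂ) by norm_num, cpow_eq_exp (by norm_num)]]
  rw [show ((2 : ℂ)) ^ (1 - (s - 1 / 6)) = Complex.exp ((Real.log 2 : ℂ) * (1 - (s - 1 / 6))) by
    rw [show (2 : ℂ) = ((2 : ℝ) : ℂ) by norm_num, cpow_eq_exp (by norm_num)]]
  rw [show ((2 : ℂ)) ^ (1 - (s + 1 / 6)) = Complex.exp ((Real.log 2 : ℂ) * (1 - (s + 1 / 6))) by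
    rw [show (2 : ℂ) = ((2 : ℝ) : ℂ) by norm_num, cpow_eq_exp (by norm_num)]]
  rw [show ((Real.pi : ℂ)) ^ (4 * s) = Complex.exp ((Real.log Real.pi : ℂ) * (4 * s)) by
    rw [cpow_eq_exp hπ]]
  rw [show ((Real.pi : ℂ)) ^ (4 : ℕ) = Complex.exp ((Real.log Real.pi : ℂ) * ((4 : ℕ) : ℂ)) by
    rw [← Complex.cpow_natCast, cpow_eq_exp hπ]]
  rw [show ((Real.sqrt Real.pi : ℝ) : ℂ) ^ (4 : ℕ)
      = Complex.exp ((Real.log (Real.sqrt Real.pi) : ℂ) * ((4 : ℕ) : ℂ)) by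
    rw [← Complex.cpow_natCast, cpow_eq_exp (Real.sqrt_pos.mpr hπ)]]
  apply exp_helper
  have hlog : Real.log (2 ^ 4 * 3 ^ 6 / Real.pi ^ 4)
      = 4 * Real.log 2 + 6 * Real.log 3 - 4 * Real.log Real.pi := by
    rw [Real.log_div (by positivity) (by positivity), Real.log_mul (by positivity) (by positivity),
      Real.log_pow, Real.log_pow, Real.log_pow]
    push_cast; ring
  have hlog34 : Real.log (3 / 4 : ℝ) = Real.log 3 - 2 * Real.log 2 := by
    rw [Real.log_div (by norm_num) (by norm_num), show (4 : ℝ) = 2 ^ 2 by norm_num, Real.log_pow]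
    push_cast; ring
  rw [hlog, hlog34, Real.log_sqrt hπ.le]
  push_cast
  ring

lemma Gne (s : ℂ) (hs : ∀ k : ℤ, 6 * s ≠ (k : ℂ)) (z : ℂ) (k0 : ℤ)
    (hz : 12 * z = 6 * s + (k0 : ℂ)) : Complex.Gamma z ≠ 0 := by
  apply Complex.Gamma_ne_zero
  intro m hm
  apply hs (-12 * m - k0)
  push_cast
  linear_combination 12 * hm - hz

lemma Sne (s : ℂ) (hs : ∀ k : ℤ, 6 * s ≠ (k : ℂ)) (z : ℂ) (k0 : ℤ)
    (hz : 12 * z = 6 * s + (k0 : ℂ)) : Complex.sin ((Real.pi : ℂ) * z) ≠ 0 := by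
  intro h
  rcases Complex.sin_eq_zero_iff.mp h with ⟨k, hk⟩
  have hπ : (Real.pi : ℂ) ≠ 0 := Complex.ofReal_ne_zero.mpr Real.pi_ne_zero
  have hzk : z = (k : ℂ) := by
    apply mul_left_cancel₀ hπ
    linear_combination hk
  apply hs (12 * k - k0)
  push_cast
  linear_combination 12 * hzk - hz

lemma keyB (s : ℂ) (hs : ∀ k : ℤ, 6 * s ≠ (k : ℂ)) :
    DeltaPlus (1 - s) * ((3 : ℂ) ^ (6 * s - 2) / (2 * (Real.pi : ℂ) ^ (4 * s)) *
        (Complex.Gamma s) ^ 2 * Complex.Gamma (s - 1 / 6) * Complex.Gamma (s + 1 / 6)) *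
      (Complex.sin (2 * (Real.pi : ℂ) * s) + (Real.sqrt 3 : ℂ) * Complex.sin ((Real.pi : ℂ) * s))
      = 3 * DeltaPlus s := by
  have hu1 : Complex.sin ((Real.pi : ℂ) * (s / 2)) ≠ 0 := Sne s hs _ 0 (by push_cast; ring)
  have hu2 : Complex.sin ((Real.pi : ℂ) * (s / 2 + 1 / 2)) ≠ 0 := Sne s hs _ 6 (by push_cast; ring)
  have hu5 : Complex.sin ((Real.pi : ℂ) * (s / 2 + 5 / 12)) ≠ 0 := Sne s hs _ 5 (by push_cast; ring)
  have hu6 : Complex.sin ((Real.pi : ℂ) * (s / 2 + 7 / 12)) ≠ 0 := Sne s hs _ 7 (by push_cast; ring)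
  have hg1 : Complex.Gamma (s / 2) ≠ 0 := Gne s hs _ 0 (by push_cast; ring)
  have hg2 : Complex.Gamma (s / 2 + 1 / 2) ≠ 0 := Gne s hs _ 6 (by push_cast; ring)
  have hg5 : Complex.Gamma (s / 2 + 5 / 12) ≠ 0 := Gne s hs _ 5 (by push_cast; ring)
  have hg6 : Complex.Gamma (s / 2 + 7 / 12) ≠ 0 := Gne s hs _ 7 (by push_cast; ring)
  have hq : ((Real.sqrt Real.pi : ℝ) : ℂ) ≠ 0 :=
    Complex.ofReal_ne_zero.mpr (Real.sqrt_ne_zero'.mpr Real.pi_pos)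
  have hb1 : ((2 : ℂ)) ^ ((1 : ℂ) - s) ≠ 0 := by simp [Complex.cpow_eq_zero_iff]
  have hb2 : ((2 : ℂ)) ^ ((1 : ℂ) - (s - 1 / 6)) ≠ 0 := by simp [Complex.cpow_eq_zero_iff]
  have hb3 : ((2 : ℂ)) ^ ((1 : ℂ) - (s + 1 / 6)) ≠ 0 := by simp [Complex.cpow_eq_zero_iff]
  have hw : ((Real.pi : ℂ)) ^ (4 * s) ≠ 0 := by
    simp [Complex.cpow_eq_zero_iff, Real.pi_ne_zero]
  have e1 : Complex.Gamma (s / 2) * Complex.Gamma (1 - s / 2) *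
      Complex.sin ((Real.pi : ℂ) * (s / 2)) = (Real.pi : ℂ) := by
    rw [Complex.Gamma_mul_Gamma_one_sub (s / 2), div_mul_cancel₀ _ hu1]
  have e2 : Complex.Gamma (s / 2 + 1 / 2) * Complex.Gamma (1 - (s / 2 + 1 / 2)) *
      Complex.sin ((Real.pi : ℂ) * (s / 2 + 1 / 2)) = (Real.pi : ℂ) := by
    rw [Complex.Gamma_mul_Gamma_one_sub (s / 2 + 1 / 2), div_mul_cancel₀ _ hu2]
  have e5 : Complex.Gamma (s / 2 + 5 / 12) * Complex.Gamma (1 - (s / 2 + 5 / 12)) *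
      Complex.sin ((Real.pi : ℂ) * (s / 2 + 5 / 12)) = (Real.pi : ℂ) := by
    rw [Complex.Gamma_mul_Gamma_one_sub (s / 2 + 5 / 12), div_mul_cancel₀ _ hu5]
  have e6 : Complex.Gamma (s / 2 + 7 / 12) * Complex.Gamma (1 - (s / 2 + 7 / 12)) *
      Complex.sin ((Real.pi : ℂ) * (s / 2 + 7 / 12)) = (Real.pi : ℂ) := by
    rw [Complex.Gamma_mul_Gamma_one_sub (s / 2 + 7 / 12), div_mul_cancel₀ _ hu6]
  have d1 := Complex.Gamma_mul_Gamma_add_half (s / 2)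
  rw [show (2 : ℂ) * (s / 2) = s by ring] at d1
  have d2 := Complex.Gamma_mul_Gamma_add_half (s / 2 - 1 / 12)
  rw [show s / 2 - (1 : ℂ) / 12 + 1 / 2 = s / 2 + 5 / 12 by ring,
    show (2 : ℂ) * (s / 2 - 1 / 12) = s - 1 / 6 by ring] at d2
  have d3 := Complex.Gamma_mul_Gamma_add_half (s / 2 + 1 / 12)
  rw [show s / 2 + (1 : ℂ) / 12 + 1 / 2 = s / 2 + 7 / 12 by ring,
    show (2 : ℂ) * (s / 2 + 1 / 12) = s + 1 / 6 by ring] at d3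
  have AB := abstract_key e1 e2 e5 e6 d1 d2 d3 (trigB s) (powId s) hg1 hg2 hg5 hg6 hb1 hb2 hb3 hq
  rw [show (1 : ℂ) - s / 2 = (1 - s) / 2 + 1 / 2 by ring,
    show (1 : ℂ) - (s / 2 + 1 / 2) = (1 - s) / 2 by ring,
    show (1 : ℂ) - (s / 2 + 7 / 12) = (1 - s) / 2 - 1 / 12 by ring,
    show (1 : ℂ) - (s / 2 + 5 / 12) = (1 - s) / 2 + 1 / 12 by ring] at AB
  have h2w : (2 * (Real.pi : ℂ) ^ (4 * s)) ≠ 0 := mul_ne_zero two_ne_zero hw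
  have hcan : (2 * (Real.pi : ℂ) ^ (4 * s)) * (2 * (Real.pi : ℂ) ^ (4 * s))⁻¹ = 1 :=
    mul_inv_cancel₀ h2w
  simp only [DeltaPlus]
  linear_combination (2 * (Real.pi : ℂ) ^ (4 * s))⁻¹ * AB +
    (3 * (((2 : ℂ) ^ 4 * 3 ^ 6 / (Real.pi : ℂ) ^ 4) ^ (s / 2) * Complex.Gamma (s / 2) *
      Complex.Gamma (s / 2 + 1 / 2) * Complex.Gamma (s / 2 - 1 / 12) *
      Complex.Gamma (s / 2 + 1 / 12))) * hcan

lemma keyD (s : ℂ) (hs : ∀ k : ℤ, 6 * s ≠ (k : ℂ)) :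
    DeltaMinus (1 - s) * ((3 : ℂ) ^ (6 * s - 2) / (2 * (Real.pi : ℂ) ^ (4 * s)) *
        (Complex.Gamma s) ^ 2 * Complex.Gamma (s - 1 / 6) * Complex.Gamma (s + 1 / 6)) *
      ((Real.sqrt 3 : ℂ) * Complex.sin ((Real.pi : ℂ) * s) - Complex.sin (2 * (Real.pi : ℂ) * s))
      = 3 * DeltaMinus s := by
  have hu1 : Complex.sin ((Real.pi : ℂ) * (s / 2)) ≠ 0 := Sne s hs _ 0 (by push_cast; ring)
  have hu2 : Complex.sin ((Real.pi : ℂ) * (s / 2 + 1 / 2)) ≠ 0 := Sne s hs _ 6 (by push_cast; ring)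
  have hu5 : Complex.sin ((Real.pi : ℂ) * (s / 2 - 1 / 12)) ≠ 0 := Sne s hs _ (-1) (by push_cast; ring)
  have hu6 : Complex.sin ((Real.pi : ℂ) * (s / 2 + 1 / 12)) ≠ 0 := Sne s hs _ 1 (by push_cast; ring)
  have hg1 : Complex.Gamma (s / 2) ≠ 0 := Gne s hs _ 0 (by push_cast; ring)
  have hg2 : Complex.Gamma (s / 2 + 1 / 2) ≠ 0 := Gne s hs _ 6 (by push_cast; ring)
  have hg5 : Complex.Gamma (s / 2 - 1 / 12) ≠ 0 := Gne s hs _ (-1) (by push_cast; ring)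
  have hg6 : Complex.Gamma (s / 2 + 1 / 12) ≠ 0 := Gne s hs _ 1 (by push_cast; ring)
  have hq : ((Real.sqrt Real.pi : ℝ) : ℂ) ≠ 0 :=
    Complex.ofReal_ne_zero.mpr (Real.sqrt_ne_zero'.mpr Real.pi_pos)
  have hb1 : ((2 : ℂ)) ^ ((1 : ℂ) - s) ≠ 0 := by simp [Complex.cpow_eq_zero_iff]
  have hb2 : ((2 : ℂ)) ^ ((1 : ℂ) - (s - 1 / 6)) ≠ 0 := by simp [Complex.cpow_eq_zero_iff]
  have hb3 : ((2 : ℂ)) ^ ((1 : ℂ) - (s + 1 / 6)) ≠ 0 := by simp [Complex.cpow_eq_zero_iff]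
  have hw : ((Real.pi : ℂ)) ^ (4 * s) ≠ 0 := by
    simp [Complex.cpow_eq_zero_iff, Real.pi_ne_zero]
  have e1 : Complex.Gamma (s / 2) * Complex.Gamma (1 - s / 2) *
      Complex.sin ((Real.pi : ℂ) * (s / 2)) = (Real.pi : ℂ) := by
    rw [Complex.Gamma_mul_Gamma_one_sub (s / 2), div_mul_cancel₀ _ hu1]
  have e2 : Complex.Gamma (s / 2 + 1 / 2) * Complex.Gamma (1 - (s / 2 + 1 / 2)) *
      Complex.sin ((Real.pi : ℂ) * (s / 2 + 1 / 2)) = (Real.pi : ℂ) := by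
    rw [Complex.Gamma_mul_Gamma_one_sub (s / 2 + 1 / 2), div_mul_cancel₀ _ hu2]
  have e5 : Complex.Gamma (s / 2 - 1 / 12) * Complex.Gamma (1 - (s / 2 - 1 / 12)) *
      Complex.sin ((Real.pi : ℂ) * (s / 2 - 1 / 12)) = (Real.pi : ℂ) := by
    rw [Complex.Gamma_mul_Gamma_one_sub (s / 2 - 1 / 12), div_mul_cancel₀ _ hu5]
  have e6 : Complex.Gamma (s / 2 + 1 / 12) * Complex.Gamma (1 - (s / 2 + 1 / 12)) *
      Complex.sin ((Real.pi : ℂ) * (s / 2 + 1 / 12)) = (Real.pi : ℂ) := by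
    rw [Complex.Gamma_mul_Gamma_one_sub (s / 2 + 1 / 12), div_mul_cancel₀ _ hu6]
  have d1 := Complex.Gamma_mul_Gamma_add_half (s / 2)
  rw [show (2 : ℂ) * (s / 2) = s by ring] at d1
  have d2 := Complex.Gamma_mul_Gamma_add_half (s / 2 - 1 / 12)
  rw [show s / 2 - (1 : ℂ) / 12 + 1 / 2 = s / 2 + 5 / 12 by ring,
    show (2 : ℂ) * (s / 2 - 1 / 12) = s - 1 / 6 by ring] at d2
  have d3 := Complex.Gamma_mul_Gamma_add_half (s / 2 + 1 / 12)
  rw [show s / 2 + (1 : ℂ) / 12 + 1 / 2 = s / 2 + 7 / 12 by ring,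
    show (2 : ℂ) * (s / 2 + 1 / 12) = s + 1 / 6 by ring] at d3
  have d2' : Complex.Gamma (s / 2 + 5 / 12) * Complex.Gamma (s / 2 - 1 / 12)
      = Complex.Gamma (s - 1 / 6) * (2 : ℂ) ^ ((1 : ℂ) - (s - 1 / 6)) *
        ((Real.sqrt Real.pi : ℝ) : ℂ) := by linear_combination d2
  have d3' : Complex.Gamma (s / 2 + 7 / 12) * Complex.Gamma (s / 2 + 1 / 12)
      = Complex.Gamma (s + 1 / 6) * (2 : ℂ) ^ ((1 : ℂ) - (s + 1 / 6)) *
        ((Real.sqrt Real.pi : ℝ) : ℂ) := by linear_combination d3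
  have AB := abstract_key e1 e2 e5 e6 d1 d2' d3' (trigD s) (powId s) hg1 hg2 hg5 hg6 hb1 hb2 hb3 hq
  rw [show (1 : ℂ) - s / 2 = (1 - s) / 2 + 1 / 2 by ring,
    show (1 : ℂ) - (s / 2 + 1 / 2) = (1 - s) / 2 by ring,
    show (1 : ℂ) - (s / 2 + 1 / 12) = (1 - s) / 2 + 5 / 12 by ring,
    show (1 : ℂ) - (s / 2 - 1 / 12) = (1 - s) / 2 + 7 / 12 by ring] at AB
  have h2w : (2 * (Real.pi : ℂ) ^ (4 * s)) ≠ 0 := mul_ne_zero two_ne_zero hw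
  have hcan : (2 * (Real.pi : ℂ) ^ (4 * s)) * (2 * (Real.pi : ℂ) ^ (4 * s))⁻¹ = 1 :=
    mul_inv_cancel₀ h2w
  simp only [DeltaMinus]
  linear_combination (2 * (Real.pi : ℂ) ^ (4 * s))⁻¹ * AB +
    (3 * (((2 : ℂ) ^ 4 * 3 ^ 6 / (Real.pi : ℂ) ^ 4) ^ (s / 2) * Complex.Gamma (s / 2) *
      Complex.Gamma (s / 2 + 1 / 2) * Complex.Gamma (s / 2 + 5 / 12) *
      Complex.Gamma (s / 2 + 7 / 12))) * hcan

/-- The Datskovsky–Wright diagonalization identity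
`Δ(1-s) · T · M(s) = diag(3, -3) · Δ(s) · T`, valid away from the poles of the Gamma factors
(all of which lie in `(1/6)ℤ`). -/
theorem deltaMat_T_M_eq (s : ℂ) (hs : ∀ k : ℤ, 6 * s ≠ (k : ℂ)) :
    DeltaMat (1 - s) * Tmat * Mmat s = !![(3 : ℂ), 0; 0, -3] * DeltaMat s * Tmat := by
  have KB := keyB s hs
  have KD := keyD s hs
  have sq3 : (Real.sqrt 3 : ℂ) * (Real.sqrt 3 : ℂ) = 3 := by
    rw [← Complex.ofReal_mul, Real.mul_self_sqrt (by norm_num : (0:ℝ) ≤ 3)]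
    norm_num
  ext i j
  fin_cases i <;> fin_cases j <;>
    simp only [DeltaMat, Tmat, Mmat, Matrix.mul_apply, Matrix.smul_apply, Fin.sum_univ_two,
      Fin.isValue, Fin.mk_zero, Fin.mk_one, Matrix.of_apply, Matrix.cons_val', Matrix.cons_val_zero,
      Matrix.cons_val_one, Matrix.head_cons, Matrix.empty_val', Matrix.cons_val_fin_one,
      Matrix.head_fin_const, smul_eq_mul]
  · linear_combination (Real.sqrt 3 : ℂ) * KB - (DeltaPlus (1 - s) *
      ((3 : ℂ) ^ (6 * s - 2) / (2 * (Real.pi : ℂ) ^ (4 * s)) * (Complex.Gamma s) ^ 2 *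
        Complex.Gamma (s - 1 / 6) * Complex.Gamma (s + 1 / 6)) *
      Complex.sin ((Real.pi : ℂ) * s)) * sq3
  · linear_combination KB
  · linear_combination -(Real.sqrt 3 : ℂ) * KD + (DeltaMinus (1 - s) *
      ((3 : ℂ) ^ (6 * s - 2) / (2 * (Real.pi : ℂ) ^ (4 * s)) * (Complex.Gamma s) ^ 2 *
        Complex.Gamma (s - 1 / 6) * Complex.Gamma (s + 1 / 6)) *
      Complex.sin ((Real.pi : ℂ) * s)) * sq3
  · linear_combination KD
end
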